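/- arXiv:2205.01409 — 11 statements merged into one kernel-verified Lean document; each statement's English description precedes it below -/
import Mathlib

section
/- Let ℓ ≥ 3 be an integer and let (μ, d) ∈ U^(0). Then the following are equivalent: (a) there exist an integer m ≥ 1, an element (η, a) ∈ U^(1), an element (ζ, b) ∈ U^(−1) and an element (μ', c) ∈ U^(0) such that m·μ = η + ζ + μ' (pointwise on Fin N) and m·d = a + b + c; (b) Σ_{i ∈ Fin N} μ(i) < ℓ·d, or μ(i) > 0 for every i ∈ Fin N. (This is the monomial-level form of the theorem that the radical of the trace of the canonical module of the Ehrhart ring of the stable set polytope of the (2ℓ+1)-cycle equals the intersection of the 2ℓ+1 prime ideals p_0, …, p_{2ℓ}, where p_i is spanned by the monomials T^μ with μ(v_i) > 0 or Σμ < ℓ·d.) -/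
/-!
If `Σ μ = ℓ d` and `μ i₀ = 0`, summing a decomposition `m μ = η + ζ + μ'` forces every sum
constraint to be tight, in particular `Σ η = ℓ a - 1` and `η i₀ = 1`; but the remaining `2ℓ`
coordinates of `η` split into `ℓ` adjacent pairs, each of sum at most `a - 1`, so
`Σ η ≤ 1 + ℓ (a - 1)`, which needs `ℓ ≤ 2`. Conversely, with `m = ℓ - 2` one takes `η` constant
equal to `t`, `a = 2t + 1`, `ζ = m μ - t` and `μ' = 0`, where `t = 1` if `Σ μ < ℓ d` and
`t = ℓ - 1` if `μ > 0`.
-/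

/-- `(μ, d)` belongs to `U^(n)` for the cycle of length `2ℓ+1`. -/
def inU (ℓ : ℕ) (n : ℤ) (μ : Fin (2 * ℓ + 1) → ℤ) (d : ℤ) : Prop :=
  (∀ i, n ≤ μ i) ∧
  (∀ i : Fin (2 * ℓ + 1), μ i + μ (i + 1) ≤ d - n) ∧
  (∑ i, μ i ≤ (ℓ : ℤ) * d - n)

open Finset

lemma sum_range_two_mul_add_one_le (g : ℕ → ℤ) (s : ℤ) (h : ∀ k, g k + g (k + 1) ≤ s) (L : ℕ) :
    ∑ j ∈ range (2 * L + 1), g j ≤ g 0 + L * s := by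
  induction L with
  | zero => simp
  | succ L ih =>
    rw [show 2 * (L + 1) + 1 = 2 * L + 1 + 1 + 1 by ring, sum_range_succ, sum_range_succ]
    have := h (2 * L + 1)
    push_cast
    linarith

open Fin.NatCast in
/-- On a cycle of odd length `2ℓ + 1`, the vertices other than `i₀` split into `ℓ` edges. -/
lemma sum_le_add_mul_of_add_succ_le {ℓ : ℕ} (f : Fin (2 * ℓ + 1) → ℤ) (s : ℤ)
    (h : ∀ i, f i + f (i + 1) ≤ s) (i₀ : Fin (2 * ℓ + 1)) :
    ∑ i, f i ≤ f i₀ + ℓ * s := by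
  have hrot : ∑ i, f i = ∑ j ∈ range (2 * ℓ + 1), f (i₀ + (j : Fin (2 * ℓ + 1))) := by
    rw [← Fin.sum_univ_eq_sum_range, ← Equiv.sum_comp (Equiv.addLeft i₀) f]
    simp [Fin.cast_val_eq_self]
  rw [hrot]
  refine (sum_range_two_mul_add_one_le _ s (fun k => ?_) ℓ).trans_eq (by simp)
  simpa only [Nat.cast_succ, add_assoc] using h (i₀ + (k : Fin (2 * ℓ + 1)))

section

variable {ℓ : ℕ} {μ : Fin (2 * ℓ + 1) → ℤ} {d : ℤ}

lemma le_two_of_decomposition {m : ℕ} {η ζ μ' : Fin (2 * ℓ + 1) → ℤ} {a b c : ℤ}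
    (hη : inU ℓ 1 η a) (hζ : inU ℓ (-1) ζ b) (hμ' : inU ℓ 0 μ' c)
    (hsplit : ∀ i, (m : ℤ) * μ i = η i + ζ i + μ' i) (hd : (m : ℤ) * d = a + b + c)
    (hsum : ℓ * d ≤ ∑ i, μ i) {i₀ : Fin (2 * ℓ + 1)} (hi₀ : μ i₀ ≤ 0) :
    ℓ ≤ 2 := by
  obtain ⟨hη_ge, hη_adj, hη_sum⟩ := hη
  obtain ⟨hζ_ge, -, hζ_sum⟩ := hζ
  obtain ⟨hμ'_ge, -, hμ'_sum⟩ := hμ'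
  have hsums : (m : ℤ) * ∑ i, μ i = ∑ i, η i + ∑ i, ζ i + ∑ i, μ' i := by
    simp only [mul_sum, hsplit, sum_add_distrib]
  have hmsum : (m : ℤ) * (ℓ * d) ≤ (m : ℤ) * ∑ i, μ i :=
    mul_le_mul_of_nonneg_left hsum (Nat.cast_nonneg m)
  have hη_tight : ∑ i, η i = ℓ * a - 1 := by
    have : (m : ℤ) * (ℓ * d) = ℓ * (a + b + c) := by rw [← hd]; ring
    linarith
  have hηi₀ : η i₀ = 1 := by
    have := hsplit i₀
    have := mul_nonpos_of_nonneg_of_nonpos (Nat.cast_nonneg m) hi₀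
    linarith [hη_ge i₀, hζ_ge i₀, hμ'_ge i₀]
  have hcycle := sum_le_add_mul_of_add_succ_le η (a - 1) (fun i => by linarith [hη_adj i]) i₀
  rw [hη_tight, hηi₀] at hcycle
  exact_mod_cast (show (ℓ : ℤ) ≤ 2 by linarith)

lemma exists_decomposition_of_const (hμ : inU ℓ 0 μ d) (k : ℕ) (t : ℤ) (ht : 1 ≤ t)
    (htℓ : t ≤ ℓ - 1) (hμ_ge : ∀ i, t - 1 ≤ k * μ i)
    (hμ_sum : k * ∑ i, μ i ≤ ℓ * (k * d) - (ℓ - 1 - t)) :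
    ∃ (η : Fin (2 * ℓ + 1) → ℤ) (a : ℤ) (ζ : Fin (2 * ℓ + 1) → ℤ) (b : ℤ)
      (μ' : Fin (2 * ℓ + 1) → ℤ) (c : ℤ),
      inU ℓ 1 η a ∧ inU ℓ (-1) ζ b ∧ inU ℓ 0 μ' c ∧
      (∀ i, (k : ℤ) * μ i = η i + ζ i + μ' i) ∧ (k : ℤ) * d = a + b + c := by
  obtain ⟨-, hμ_adj, -⟩ := hμ
  refine ⟨fun _ => t, 2 * t + 1, fun i => k * μ i - t, k * d - (2 * t + 1), 0, 0,
    ⟨fun _ => ht, fun _ => by simp only; linarith, ?_⟩, ⟨fun i => by linarith [hμ_ge i], fun i => ?_, ?_⟩,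
    ⟨fun _ => le_rfl, fun _ => by simp, by simp⟩, fun i => by simp, by ring⟩
  · simp only [sum_const, card_univ, Fintype.card_fin, nsmul_eq_mul]
    push_cast
    nlinarith
  · have := mul_le_mul_of_nonneg_left (hμ_adj i) (Nat.cast_nonneg (α := ℤ) k)
    simp only
    linarith
  · simp only [sum_sub_distrib, ← mul_sum, sum_const, card_univ, Fintype.card_fin,
      nsmul_eq_mul]
    push_cast
    linarith

end

theorem stmt_0 (ℓ : ℕ) (hℓ : 3 ≤ ℓ) (μ : Fin (2 * ℓ + 1) → ℤ) (d : ℤ)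
    (hμ : inU ℓ 0 μ d) :
    (∃ m : ℕ, 1 ≤ m ∧
      ∃ (η : Fin (2 * ℓ + 1) → ℤ) (a : ℤ) (ζ : Fin (2 * ℓ + 1) → ℤ) (b : ℤ)
        (μ' : Fin (2 * ℓ + 1) → ℤ) (c : ℤ),
        inU ℓ 1 η a ∧ inU ℓ (-1) ζ b ∧ inU ℓ 0 μ' c ∧
        (∀ i, (m : ℤ) * μ i = η i + ζ i + μ' i) ∧ (m : ℤ) * d = a + b + c) ↔
    ((∑ i, μ i < (ℓ : ℤ) * d) ∨ (∀ i, 0 < μ i)) := by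
  have hm : ((ℓ - 2 : ℕ) : ℤ) = ℓ - 2 := by omega
  constructor
  · rintro ⟨m, -, η, a, ζ, b, μ', c, hη, hζ, hμ', hsplit, hd⟩
    by_contra! ⟨hsum, i₀, hi₀⟩
    have := le_two_of_decomposition hη hζ hμ' hsplit hd hsum hi₀
    omega
  · rintro (hsum | hpos) <;> refine ⟨ℓ - 2, by omega, ?_⟩
    · refine exists_decomposition_of_const hμ (ℓ - 2) 1 le_rfl (by omega)
        (fun i => by rw [hm]; nlinarith [hμ.1 i]) ?_
      rw [hm]
      nlinarith
    · refine exists_decomposition_of_const hμ (ℓ - 2) (ℓ - 1) (by omega) le_rfl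
        (fun i => by rw [hm]; nlinarith [hpos i]) ?_
      rw [hm]
      nlinarith [hμ.2.2]
end

section
/- Let ℓ ≥ 3 be an integer. Suppose (η, a) ∈ U^(1), (ζ, b) ∈ U^(−1), and there is an index i ∈ Fin N with η(i) + ζ(i) = 0. Then Σ_{j ∈ Fin N} (η(j) + ζ(j)) < ℓ·(a + b). (Monomial-level form of the lemma that the trace of the canonical module is contained in each prime p_i: no monomial of the trace of ω can simultaneously vanish at a vertex and have its exponent sum equal to ℓ times its degree.) -/
/-!
Starting at the vertex `i`, the remaining `2ℓ` vertices of the odd cycle split into `ℓ` edges.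
The edge inequalities of `U^(1)` then give `∑ η ≤ η i + ℓ (a - 1)`, and `η i ≤ 1` because
`η i = -ζ i` and `ζ ≥ -1`. Together with `∑ ζ ≤ ℓ b + 1` this yields
`∑ (η + ζ) ≤ ℓ (a + b) - ℓ + 2 < ℓ (a + b)` as soon as `ℓ > 2`.
-/

theorem Finset.sum_range_two_mul_add_one {M : Type*} [AddCommMonoid M] (g : ℕ → M) (ℓ : ℕ) :
    ∑ k ∈ range (2 * ℓ + 1), g k = g 0 + ∑ m ∈ range ℓ, (g (2 * m + 1) + g (2 * m + 2)) := by
  induction ℓ with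
  | zero => simp
  | succ n ih =>
    rw [show 2 * (n + 1) + 1 = 2 * n + 1 + 1 + 1 by ring, sum_range_succ, sum_range_succ, ih,
      sum_range_succ, add_assoc, add_assoc]

open Fin.CommRing in
theorem sum_le_apply_add_nsmul_of_add_succ_le {M : Type*} [AddCommMonoid M] [PartialOrder M]
    [IsOrderedAddMonoid M] {ℓ : ℕ} {f : Fin (2 * ℓ + 1) → M} {c : M}
    (h : ∀ j, f j + f (j + 1) ≤ c) (i : Fin (2 * ℓ + 1)) :
    ∑ j, f j ≤ f i + ℓ • c := by
  have hrot : ∑ j, f j = ∑ k ∈ Finset.range (2 * ℓ + 1), f (i + k) := by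
    rw [← Fin.sum_univ_eq_sum_range (fun k : ℕ => f (i + k))]
    simp only [Fin.cast_val_eq_self]
    exact (Equiv.sum_comp (Equiv.addLeft i) f).symm
  have hedge (m : ℕ) : f (i + (2 * m + 1 : ℕ)) + f (i + (2 * m + 2 : ℕ)) ≤ c := by
    have := h (i + (2 * m + 1 : ℕ))
    convert this using 3
    push_cast
    ring
  calc ∑ j, f j
      = f i + ∑ m ∈ Finset.range ℓ, (f (i + (2 * m + 1 : ℕ)) + f (i + (2 * m + 2 : ℕ))) := by
        rw [hrot, Finset.sum_range_two_mul_add_one]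
        simp
    _ ≤ f i + ∑ _m ∈ Finset.range ℓ, c := by gcongr with m; exact hedge m
    _ = f i + ℓ • c := by simp

theorem stmt_1 (ℓ : ℕ) (hℓ : 3 ≤ ℓ) (η ζ : Fin (2 * ℓ + 1) → ℤ) (a b : ℤ)
    (hη : inU ℓ 1 η a) (hζ : inU ℓ (-1) ζ b)
    (i : Fin (2 * ℓ + 1)) (hi : η i + ζ i = 0) :
    ∑ j, (η j + ζ j) < (ℓ : ℤ) * (a + b) := by
  obtain ⟨-, hη_edge, -⟩ := hη
  obtain ⟨hζ_ge, -, hζ_sum⟩ := hζ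
  have hηi : η i ≤ 1 := by linarith [hζ_ge i]
  have hη_sum : ∑ j, η j ≤ η i + ℓ • (a - 1) := sum_le_apply_add_nsmul_of_add_succ_le hη_edge i
  have hℓ' : (3 : ℤ) ≤ ℓ := by exact_mod_cast hℓ
  rw [nsmul_eq_mul] at hη_sum
  rw [Finset.sum_add_distrib]
  linarith
end

section
/- Let ℓ ≥ 3 be an integer and let (μ, d) ∈ U^(0) satisfy μ(i) ≥ 1 for every i ∈ Fin N. Define η : Fin N → ℤ by η(i) = ℓ − 1 for all i, set a = 2ℓ − 1, and define ζ = (ℓ−2)·μ − η (pointwise) and b = (ℓ−2)·d − (2ℓ−1). Then (η, a) ∈ U^(1) and (ζ, b) ∈ U^(−1); in particular, (ℓ−2)·(μ, d) is the sum of an element of U^(1) and an element of U^(−1), so T^μ lies in the radical of the trace of the canonical module. -/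
theorem stmt_2 (ℓ : ℕ) (hℓ : 3 ≤ ℓ) (μ : Fin (2 * ℓ + 1) → ℤ) (d : ℤ)
    (hμ : inU ℓ 0 μ d) (hpos : ∀ i, 1 ≤ μ i)
    (η : Fin (2 * ℓ + 1) → ℤ) (hη : η = fun _ => (ℓ : ℤ) - 1)
    (a : ℤ) (ha : a = 2 * (ℓ : ℤ) - 1)
    (ζ : Fin (2 * ℓ + 1) → ℤ) (hζ : ζ = fun i => ((ℓ : ℤ) - 2) * μ i - η i)
    (b : ℤ) (hb : b = ((ℓ : ℤ) - 2) * d - (2 * (ℓ : ℤ) - 1)) :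
    inU ℓ 1 η a ∧ inU ℓ (-1) ζ b ∧
    (∀ i, ((ℓ : ℤ) - 2) * μ i = η i + ζ i) ∧ ((ℓ : ℤ) - 2) * d = a + b := by
  obtain ⟨h1, h2, h3⟩ := hμ
  have hl3 : (3 : ℤ) ≤ (ℓ : ℤ) := by exact_mod_cast hℓ
  have hl2 : (0 : ℤ) ≤ (ℓ : ℤ) - 2 := by linarith
  subst hη ha hζ hb
  refine ⟨⟨fun i => by dsimp; linarith, fun i => by dsimp; linarith, ?_⟩,
    ⟨fun i => by dsimp; nlinarith [hpos i], fun i => by dsimp; nlinarith [h2 i], ?_⟩,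
    fun i => by dsimp; ring, by ring⟩
  · rw [Finset.sum_const]
    simp only [Finset.card_univ, Fintype.card_fin, nsmul_eq_mul]
    push_cast
    ring_nf
    nlinarith
  · have hsum : ∑ i, (((ℓ:ℤ) - 2) * μ i - ((ℓ:ℤ) - 1)) =
        ((ℓ:ℤ) - 2) * ∑ i, μ i - (2 * (ℓ:ℤ) + 1) * ((ℓ:ℤ) - 1) := by
      rw [Finset.sum_sub_distrib, ← Finset.mul_sum, Finset.sum_const]
      simp only [Finset.card_univ, Fintype.card_fin, nsmul_eq_mul]
      push_cast
      ring
    dsimp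
    rw [hsum]
    nlinarith
end

section
/- Let ℓ ≥ 3 be an integer and let (μ, d) ∈ U^(0) satisfy Σ_{i ∈ Fin N} μ(i) < ℓ·d. Define η : Fin N → ℤ by η(i) = 1 for all i, set a = 3, and define ζ = (ℓ−2)·μ − η (pointwise) and b = (ℓ−2)·d − 3. Then (η, a) ∈ U^(1) and (ζ, b) ∈ U^(−1); in particular, (ℓ−2)·(μ, d) is the sum of an element of U^(1) and an element of U^(−1), so T^μ lies in the radical of the trace of the canonical module. -/
theorem stmt_3 (ℓ : ℕ) (hℓ : 3 ≤ ℓ) (μ : Fin (2 * ℓ + 1) → ℤ) (d : ℤ)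
    (hμ : inU ℓ 0 μ d) (hlt : ∑ i, μ i < (ℓ : ℤ) * d)
    (η : Fin (2 * ℓ + 1) → ℤ) (hη : η = fun _ => (1 : ℤ))
    (a : ℤ) (ha : a = 3)
    (ζ : Fin (2 * ℓ + 1) → ℤ) (hζ : ζ = fun i => ((ℓ : ℤ) - 2) * μ i - η i)
    (b : ℤ) (hb : b = ((ℓ : ℤ) - 2) * d - 3) :
    inU ℓ 1 η a ∧ inU ℓ (-1) ζ b ∧
    (∀ i, ((ℓ : ℤ) - 2) * μ i = η i + ζ i) ∧ ((ℓ : ℤ) - 2) * d = a + b := by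
  obtain ⟨h0, hedge, hsum⟩ := hμ
  subst hη ha hζ hb
  have hℓZ : (3 : ℤ) ≤ (ℓ : ℤ) := by exact_mod_cast hℓ
  have hℓ2 : (0 : ℤ) ≤ (ℓ : ℤ) - 2 := by linarith
  refine ⟨⟨fun i => le_refl 1, fun i => by norm_num, ?_⟩, ⟨?_, ?_, ?_⟩, fun i => by ring, by ring⟩
  · simp only [Finset.sum_const, Finset.card_univ, Fintype.card_fin, nsmul_eq_mul, mul_one]
    push_cast
    linarith
  · intro i
    show (-1 : ℤ) ≤ ((ℓ:ℤ) - 2) * μ i - 1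
    have := h0 i
    nlinarith
  · intro i
    have h1 := hedge i
    have h2 : ((ℓ:ℤ) - 2) * (μ i + μ (i+1)) ≤ ((ℓ:ℤ) - 2) * d := by
      apply mul_le_mul_of_nonneg_left _ hℓ2
      linarith
    simp only
    linarith
  · have hsum' : ∑ i, μ i ≤ (ℓ : ℤ) * d - 1 := by linarith
    have h2 : ((ℓ:ℤ) - 2) * (∑ i, μ i) ≤ ((ℓ:ℤ) - 2) * ((ℓ:ℤ) * d - 1) :=
      mul_le_mul_of_nonneg_left hsum' hℓ2
    have h3 : ∑ i : Fin (2*ℓ+1), (((ℓ:ℤ) - 2) * μ i - 1)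
        = ((ℓ:ℤ) - 2) * (∑ i, μ i) - (2*(ℓ:ℤ)+1) := by
      rw [Finset.sum_sub_distrib, ← Finset.mul_sum, Finset.sum_const, Finset.card_univ,
        Fintype.card_fin]
      ring
    simp only
    rw [h3]
    nlinarith
end

section
/- Let ℓ ≥ 3 be an integer and let G be the cycle graph on Fin N (N = 2ℓ+1). The face F = { f ∈ STAB(G) : Σ_{i ∈ Fin N} f(i) = ℓ } of the stable set polytope has dimension exactly 2ℓ, i.e., the direction of the affine span of F in ℝ^{Fin N} has dimension 2ℓ. -/
/-- The stable set polytope of the cycle graph on `Fin N` (edges `{i, i+1 mod N}`):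
the convex hull of characteristic vectors of stable sets. -/
def stabPolytope (N : ℕ) [NeZero N] : Set (Fin N → ℝ) :=
  convexHull ℝ
    { f | ∃ S : Finset (Fin N), (∀ i ∈ S, i + 1 ∉ S) ∧
          f = fun i => if i ∈ S then (1 : ℝ) else 0 }

/-!
The face lies in the hyperplane `∑ i, f i = ℓ`, so its direction lies in the sum-zero hyperplane,
which has dimension `2ℓ`. Conversely, for each `k` the set `S_k = {k+1, k+3, …, k+2ℓ-1}` is a
stable set of size `ℓ`, so its characteristic vector `χ_k` lies on the face; since `S_{k+2}` is
`S_k` shifted by two, `χ_k - χ_{k+2} = e_{k+1} - e_k` telescopes. Differences of cyclically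
consecutive unit vectors span the sum-zero hyperplane.
-/

open Finset Module Fin.CommRing

section CoordinateSum

variable (ι R : Type*) [Fintype ι]

def coordSum [CommSemiring R] : Dual R (ι → R) := ∑ i, LinearMap.proj i

variable {ι R}

@[simp]
lemma coordSum_apply [CommSemiring R] (v : ι → R) : coordSum ι R v = ∑ i, v i := by
  simp [coordSum]

lemma finrank_ker_coordSum [Field R] [Nonempty ι] :
    finrank R (LinearMap.ker (coordSum ι R)) = Fintype.card ι - 1 := by
  classical
  have hne : coordSum ι R ≠ 0 := fun h => by
    simpa using LinearMap.congr_fun h (Pi.single (Classical.arbitrary ι) 1)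
  have := Dual.finrank_ker_add_one_of_ne_zero hne
  rw [finrank_fintype_fun_eq_card] at this
  omega

end CoordinateSum

lemma vectorSpan_le_ker_of_forall_eq {R V W : Type*} [Ring R] [AddCommGroup V] [Module R V]
    [AddCommGroup W] [Module R W] {s : Set V} (f : V →ₗ[R] W) {c : W}
    (hs : ∀ x ∈ s, f x = c) : vectorSpan R s ≤ LinearMap.ker f := by
  rw [vectorSpan_def, Submodule.span_le]
  rintro _ ⟨a, ha, b, hb, rfl⟩
  simp [hs a ha, hs b hb]

section Cyclic

variable {R : Type*} [CommRing R] {N : ℕ} [NeZero N] {P : Submodule R (Fin N → R)}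

lemma single_sub_single_zero_mem (hP : ∀ k : Fin N, Pi.single (k + 1) 1 - Pi.single k 1 ∈ P)
    (i : Fin N) : Pi.single i 1 - Pi.single 0 1 ∈ P := by
  suffices ∀ n : ℕ, Pi.single (n : Fin N) (1 : R) - Pi.single 0 1 ∈ P by
    simpa using this i
  intro n
  induction n with
  | zero => simp
  | succ n ih => simpa [Nat.cast_succ] using P.add_mem (hP n) ih

lemma ker_coordSum_le (hP : ∀ k : Fin N, Pi.single (k + 1) 1 - Pi.single k 1 ∈ P) :
    LinearMap.ker (coordSum (Fin N) R) ≤ P := by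
  intro v hv
  rw [LinearMap.mem_ker, coordSum_apply] at hv
  have hdecomp : ∑ i, v i • (Pi.single i 1 - Pi.single 0 1) = v := by
    simp_rw [smul_sub, sum_sub_distrib, ← sum_smul, hv, zero_smul, sub_zero,
      ← Pi.single_smul', smul_eq_mul, mul_one]
    exact univ_sum_single v
  rw [← hdecomp]
  exact P.sum_mem fun i _ => P.smul_mem _ (single_sub_single_zero_mem hP i)

lemma Fin.natCast_injOn_Iio : Set.InjOn (Nat.cast : ℕ → Fin N) (Set.Iio N) := by
  intro a ha b hb hab
  simpa [Fin.ext_iff, Fin.val_natCast, Nat.mod_eq_of_lt ha, Nat.mod_eq_of_lt hb] using hab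

end Cyclic

section OddCycle

variable {ℓ : ℕ}

def maxStableSet (k : Fin (2 * ℓ + 1)) : Finset (Fin (2 * ℓ + 1)) :=
  (range ℓ).image fun m => k + (2 * m + 1 : ℕ)

lemma maxStableSet_isStable (k : Fin (2 * ℓ + 1)) :
    ∀ i ∈ maxStableSet k, i + 1 ∉ maxStableSet k := by
  simp only [maxStableSet, mem_image, mem_range]
  rintro _ ⟨m, hm, rfl⟩ ⟨m', hm', h⟩
  rw [add_assoc, ← Nat.cast_succ, add_right_inj] at h
  have := Fin.natCast_injOn_Iio (Set.mem_Iio.mpr (by omega)) (Set.mem_Iio.mpr (by omega))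
    h
  omega

lemma injOn_maxStableSet (k : Fin (2 * ℓ + 1)) :
    Set.InjOn (fun m : ℕ => k + (2 * m + 1 : ℕ)) (range ℓ) := by
  intro m hm m' hm' h
  simp only [mem_coe, mem_range] at hm hm'
  have := Fin.natCast_injOn_Iio (Set.mem_Iio.mpr (by omega)) (Set.mem_Iio.mpr (by omega))
    (add_left_cancel h)
  omega

lemma card_maxStableSet (k : Fin (2 * ℓ + 1)) : #(maxStableSet k) = ℓ := by
  rw [maxStableSet, card_image_of_injOn (injOn_maxStableSet k), card_range]

lemma indicator_maxStableSet (k : Fin (2 * ℓ + 1)) :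
    (fun i => if i ∈ maxStableSet k then (1 : ℝ) else 0) =
      ∑ m ∈ range ℓ, Pi.single (k + (2 * m + 1 : ℕ)) 1 := by
  rw [← sum_image (f := fun i => Pi.single i (1 : ℝ)) (injOn_maxStableSet k)]
  ext i
  simp [maxStableSet, Finset.sum_apply]

lemma indicator_maxStableSet_sub_add_two (k : Fin (2 * ℓ + 1)) :
    (fun i => if i ∈ maxStableSet k then (1 : ℝ) else 0) -
      (fun i => if i ∈ maxStableSet (k + 2) then (1 : ℝ) else 0) =
      Pi.single (k + 1) 1 - Pi.single k 1 := by
  have hshift (m : ℕ) : k + 2 + (2 * m + 1 : ℕ) = k + (2 * (m + 1) + 1 : ℕ) := by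
    push_cast; ring
  rw [indicator_maxStableSet, indicator_maxStableSet, ← neg_sub, ← sum_sub_distrib]
  simp_rw [hshift]
  rw [sum_range_sub (G := Fin (2 * ℓ + 1) → ℝ) fun m => Pi.single (k + (2 * m + 1 : ℕ)) 1]
  simp

end OddCycle

theorem stmt_5_general (ℓ : ℕ) :
    Module.finrank ℝ
      (vectorSpan ℝ
        { f ∈ stabPolytope (2 * ℓ + 1) | ∑ i, f i = (ℓ : ℝ) }) = 2 * ℓ := by
  set F := { f ∈ stabPolytope (2 * ℓ + 1) | ∑ i, f i = (ℓ : ℝ) }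
  have hmem (k : Fin (2 * ℓ + 1)) : (fun i => if i ∈ maxStableSet k then (1 : ℝ) else 0) ∈ F :=
    ⟨subset_convexHull ℝ _ ⟨_, maxStableSet_isStable k, rfl⟩, by simp [card_maxStableSet]⟩
  have hspan : vectorSpan ℝ F = LinearMap.ker (coordSum _ ℝ) := by
    refine le_antisymm (vectorSpan_le_ker_of_forall_eq _ fun f hf => by simpa using hf.2) ?_
    refine ker_coordSum_le fun k => ?_
    rw [← indicator_maxStableSet_sub_add_two]
    exact vsub_mem_vectorSpan ℝ (hmem k) (hmem (k + 2))
  rw [hspan, finrank_ker_coordSum, Fintype.card_fin, Nat.add_sub_cancel]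

theorem stmt_5 (ℓ : ℕ) (hℓ : 3 ≤ ℓ) :
    Module.finrank ℝ
      (vectorSpan ℝ
        { f ∈ stabPolytope (2 * ℓ + 1) | ∑ i, f i = (ℓ : ℝ) }) = 2 * ℓ :=
  stmt_5_general ℓ
end

section
/- Let ℓ ≥ 3 be an integer. For every (η, a) ∈ U^(1) one has a ≥ 3; moreover, if a = 3 then η(i) = 1 for every i ∈ Fin N. (Hence T^{η_1}, with η_1 ≡ 1 and degree 3, is the unique monomial of minimal degree in the canonical ideal of the Ehrhart ring, and the a-invariant of the Ehrhart ring equals −3.) -/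
theorem stmt_6 (ℓ : ℕ) (hℓ : 3 ≤ ℓ) (η : Fin (2 * ℓ + 1) → ℤ) (a : ℤ)
    (hη : inU ℓ 1 η a) :
    3 ≤ a ∧ (a = 3 → ∀ i, η i = 1) := by
  obtain ⟨h1, h2, h3⟩ := hη
  have hsum : (2 * ℓ + 1 : ℤ) ≤ ∑ i, η i := by
    have := Finset.sum_le_sum (s := Finset.univ) (fun i _ => h1 i)
    simpa using this
  have hℓ' : (3 : ℤ) ≤ (ℓ : ℤ) := by exact_mod_cast hℓ
  constructor
  · by_contra h
    push_neg at h
    nlinarith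
  · intro ha i
    have := h2 i
    have := h1 i
    have := h1 (i + 1)
    omega
end

section
/- Let ℓ ≥ 3 be an integer. Every (μ, d) ∈ U^(0)_0 is an ℕ-linear combination of (μ_0, 1), …, (μ_{2ℓ}, 1): there exist natural numbers c_0, …, c_{2ℓ} such that μ = Σ_{i=0}^{2ℓ} c_i·μ_i (pointwise) and d = Σ_{i=0}^{2ℓ} c_i. (This shows that the Ehrhart ring of the face {f ∈ STAB(G) : f⁺(V) = ℓ} is generated by the monomials T^{μ_0}, …, T^{μ_{2ℓ}}.) -/
/-- The exponent vector `μ_i`: `μ_i(j) = 1` iff `(j - i) mod (2ℓ+1)` lies in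
`{0, 2, 4, …, 2ℓ-2}`, i.e. is even and different from `2ℓ`. -/
def muV (ℓ : ℕ) (i : Fin (2 * ℓ + 1)) : Fin (2 * ℓ + 1) → ℤ := fun j =>
  if (((j : ℤ) - (i : ℤ)) % (2 * (ℓ : ℤ) + 1)) % 2 = 0 ∧
     ((j : ℤ) - (i : ℤ)) % (2 * (ℓ : ℤ) + 1) ≠ 2 * (ℓ : ℤ)
  then 1 else 0

/-!
Write `μ_i = s(· - i)`, where `s` is the indicator of the maximum stable set `{0, 2, …, 2ℓ-2}`
of the cycle `ℤ/(2ℓ+1)`, and take `c_i = d - μ(i-2) - μ(i-1)`, which is nonnegative by the edge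
inequality at `i - 2`. Since `s(u-2) + s(u-1)` is `0` for `u = 0` and `1` otherwise, and `s` has
`ℓ` ones, `∑ c_i s(j-i) = ℓd - (∑ μ - μ(j)) = μ(j)` as soon as `∑ μ = ℓd`; likewise
`∑ c_i = (2ℓ+1)d - 2∑ μ = d`.
-/

open Finset

def stableIndicator (ℓ : ℕ) (t : Fin (2 * ℓ + 1)) : ℤ :=
  if (t : ℕ) % 2 = 0 ∧ (t : ℕ) ≠ 2 * ℓ then 1 else 0

lemma muV_eq_stableIndicator (ℓ : ℕ) (i j : Fin (2 * ℓ + 1)) :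
    muV ℓ i j = stableIndicator ℓ (j - i) := by
  have h := Fin.coe_int_sub_eq_mod j i
  push_cast at h
  simp only [muV, stableIndicator, ← h]
  split_ifs <;> omega

lemma sum_stableIndicator (ℓ : ℕ) : ∑ t, stableIndicator ℓ t = ℓ := by
  have hevens : (range (2 * ℓ + 1)).filter (fun k => k % 2 = 0 ∧ k ≠ 2 * ℓ) =
      (range ℓ).map ⟨(2 * ·), mul_right_injective₀ two_ne_zero⟩ := by
    ext k
    simp only [mem_filter, mem_range, mem_map, Function.Embedding.coeFn_mk]
    constructor
    · rintro ⟨hk, heven, hne⟩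
      exact ⟨k / 2, by omega, by omega⟩
    · rintro ⟨m, hm, rfl⟩
      omega
  simp only [stableIndicator]
  rw [Fin.sum_univ_eq_sum_range (fun k => if k % 2 = 0 ∧ k ≠ 2 * ℓ then (1 : ℤ) else 0),
    sum_boole, hevens, card_map, card_range]

lemma stableIndicator_sub_two_add_stableIndicator_sub_one (ℓ : ℕ) (u : Fin (2 * ℓ + 1)) :
    stableIndicator ℓ (u - 2) + stableIndicator ℓ (u - 1) = if u = 0 then 0 else 1 := by
  have h2 : u - 2 = u - 1 - 1 := by grind
  simp only [stableIndicator, h2, Fin.coe_sub_one, Fin.ext_iff, Fin.val_zero]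
  split_ifs <;> omega

def stableCoeff {n : ℕ} (μ : Fin (n + 1) → ℤ) (d : ℤ) (i : Fin (n + 1)) : ℤ :=
  d - μ (i - 2) - μ (i - 1)

lemma stableCoeff_nonneg {n : ℕ} {μ : Fin (n + 1) → ℤ} {d : ℤ}
    (hedge : ∀ i, μ i + μ (i + 1) ≤ d) (i : Fin (n + 1)) : 0 ≤ stableCoeff μ d i := by
  have h := hedge (i - 2)
  rw [show i - 2 + 1 = i - 1 by grind] at h
  simp only [stableCoeff]
  linarith

lemma sum_stableCoeff {n : ℕ} (μ : Fin (n + 1) → ℤ) (d : ℤ) :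
    ∑ i, stableCoeff μ d i = (n + 1) * d - 2 * ∑ i, μ i := by
  have hshift (a : Fin (n + 1)) : ∑ i, μ (i - a) = ∑ i, μ i := (Equiv.subRight a).sum_comp μ
  simp only [stableCoeff, sum_sub_distrib, hshift, sum_const, card_univ, Fintype.card_fin,
    nsmul_eq_mul]
  push_cast
  ring

lemma sum_stableCoeff_mul_stableIndicator {ℓ : ℕ} {μ : Fin (2 * ℓ + 1) → ℤ} {d : ℤ}
    (hsum : ∑ i, μ i = ℓ * d) (j : Fin (2 * ℓ + 1)) :
    ∑ i, stableCoeff μ d i * stableIndicator ℓ (j - i) = μ j := by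
  have hreflect (a : Fin (2 * ℓ + 1)) :
      ∑ i, μ (i - a) * stableIndicator ℓ (j - i) = ∑ i, μ (j - i) * stableIndicator ℓ (i - a) :=
    Fintype.sum_equiv (Equiv.subLeft (j + a)) _ _ fun i => by
      simp only [Equiv.subLeft_apply]
      congr 2 <;> abel
  have hdefect (i : Fin (2 * ℓ + 1)) :
      μ (j - i) * (stableIndicator ℓ (i - 2) + stableIndicator ℓ (i - 1)) =
        μ (j - i) - if i = 0 then μ j else 0 := by
    rw [stableIndicator_sub_two_add_stableIndicator_sub_one]
    split_ifs with h <;> simp [h]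
  have hsubLeft : ∑ i, stableIndicator ℓ (j - i) = ℓ :=
    ((Equiv.subLeft j).sum_comp _).trans (sum_stableIndicator ℓ)
  calc ∑ i, stableCoeff μ d i * stableIndicator ℓ (j - i)
      = d * ∑ i, stableIndicator ℓ (j - i) - (∑ i, μ (i - 2) * stableIndicator ℓ (j - i) +
          ∑ i, μ (i - 1) * stableIndicator ℓ (j - i)) := by
        simp only [stableCoeff, sub_mul, sum_sub_distrib, mul_sum]
        ring
    _ = d * ℓ - ∑ i, (μ (j - i) - if i = 0 then μ j else 0) := by
        simp only [hsubLeft, hreflect, ← sum_add_distrib, ← mul_add, hdefect]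
    _ = μ j := by
        rw [sum_sub_distrib, show ∑ i, μ (j - i) = ∑ i, μ i from (Equiv.subLeft j).sum_comp μ,
          hsum, Fintype.sum_ite_eq']
        ring

theorem stmt_8_general (ℓ : ℕ) (μ : Fin (2 * ℓ + 1) → ℤ) (d : ℤ)
    (hμ : inU ℓ 0 μ d) (h0 : ∑ i, μ i = (ℓ : ℤ) * d) :
    ∃ c : Fin (2 * ℓ + 1) → ℕ,
      (∀ j, μ j = ∑ i, (c i : ℤ) * muV ℓ i j) ∧ d = ∑ i, (c i : ℤ) := by
  have hedge (i : Fin (2 * ℓ + 1)) : μ i + μ (i + 1) ≤ d := by simpa using hμ.2.1 i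
  have hcast (i : Fin (2 * ℓ + 1)) : ((stableCoeff μ d i).toNat : ℤ) = stableCoeff μ d i :=
    Int.toNat_of_nonneg (stableCoeff_nonneg hedge i)
  refine ⟨fun i => (stableCoeff μ d i).toNat, fun j => ?_, ?_⟩
  · simp only [hcast, muV_eq_stableIndicator, sum_stableCoeff_mul_stableIndicator h0]
  · rw [Fintype.sum_congr _ _ hcast, sum_stableCoeff, h0]
    push_cast
    ring

theorem stmt_8 (ℓ : ℕ) (hℓ : 3 ≤ ℓ) (μ : Fin (2 * ℓ + 1) → ℤ) (d : ℤ)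
    (hμ : inU ℓ 0 μ d) (h0 : ∑ i, μ i = (ℓ : ℤ) * d) :
    ∃ c : Fin (2 * ℓ + 1) → ℕ,
      (∀ j, μ j = ∑ i, (c i : ℤ) * muV ℓ i j) ∧ d = ∑ i, (c i : ℤ) :=
  stmt_8_general ℓ μ d hμ h0
end

section
/- Let ℓ ≥ 3 be an integer. The 2ℓ+1 vectors (μ_0, 1), …, (μ_{2ℓ}, 1), regarded as elements of the ℚ-vector space (Fin N → ℚ) × ℚ, are linearly independent over ℚ. -/
/-- The vector `μ_i` over `ℚ`: `μ_i(j) = 1` iff `(j - i) mod (2ℓ+1)` lies in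
`{0, 2, 4, …, 2ℓ-2}`, i.e. is even and different from `2ℓ`. -/
def muQ (ℓ : ℕ) (i : Fin (2 * ℓ + 1)) : Fin (2 * ℓ + 1) → ℚ := fun j =>
  if (((j : ℤ) - (i : ℤ)) % (2 * (ℓ : ℤ) + 1)) % 2 = 0 ∧
     ((j : ℤ) - (i : ℤ)) % (2 * (ℓ : ℤ) + 1) ≠ 2 * (ℓ : ℤ)
  then 1 else 0

namespace Stmt9Aux

/-- index `x - 2m` in `ZMod (2ℓ+1)`, as a `Fin`. -/
def idx (ℓ : ℕ) (x : ZMod (2 * ℓ + 1)) (m : ℕ) : Fin (2 * ℓ + 1) :=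
  ⟨(x - 2 * m).val, ZMod.val_lt _⟩

lemma emod_eq_iff (ℓ : ℕ) (i j : Fin (2 * ℓ + 1)) (m : ℕ) (hm : m < ℓ) :
    ((j : ℤ) - (i : ℤ)) % (2 * (ℓ : ℤ) + 1) = 2 * (m : ℤ) ↔
      idx ℓ ((j : ℕ) : ZMod (2 * ℓ + 1)) m = i := by
  have hN : ((2 * ℓ + 1 : ℕ) : ℤ) = 2 * (ℓ : ℤ) + 1 := by push_cast; ring
  constructor
  · intro h
    have hcast : ((((j : ℤ) - (i : ℤ)) % (2 * (ℓ : ℤ) + 1) : ℤ) : ZMod (2 * ℓ + 1))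
        = (((j : ℤ) - (i : ℤ) : ℤ) : ZMod (2 * ℓ + 1)) := by
      rw [← hN]; exact_mod_cast ZMod.intCast_mod _ _
    rw [h] at hcast
    have hz : ((i : ℕ) : ZMod (2 * ℓ + 1)) = ((j : ℕ) : ZMod (2 * ℓ + 1)) - 2 * m := by
      push_cast at hcast ⊢
      linear_combination hcast
    apply Fin.ext
    show (((j : ℕ) : ZMod (2 * ℓ + 1)) - 2 * m).val = (i : ℕ)
    rw [← hz, ZMod.val_cast_of_lt i.isLt]
  · intro h
    have hvals : (((j : ℕ) : ZMod (2 * ℓ + 1)) - 2 * m).val = (i : ℕ) := congrArg Fin.val h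
    have hz : (((j : ℕ) : ZMod (2 * ℓ + 1)) - 2 * m) = ((i : ℕ) : ZMod (2 * ℓ + 1)) := by
      apply ZMod.val_injective
      rw [hvals, ZMod.val_cast_of_lt i.isLt]
    have hmod : ((j : ℤ) - (i : ℤ)) ≡ 2 * (m : ℤ) [ZMOD ((2 * ℓ + 1 : ℕ) : ℤ)] := by
      rw [← ZMod.intCast_eq_intCast_iff]
      push_cast
      linear_combination hz
    rw [Int.ModEq] at hmod
    rw [hN] at hmod
    rw [hmod, Int.emod_eq_of_lt (by positivity) (by omega)]

end Stmt9Aux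

namespace Stmt9Aux

lemma cond_iff (ℓ : ℕ) (i j : Fin (2 * ℓ + 1)) :
    ((((j : ℤ) - (i : ℤ)) % (2 * (ℓ : ℤ) + 1)) % 2 = 0 ∧
      ((j : ℤ) - (i : ℤ)) % (2 * (ℓ : ℤ) + 1) ≠ 2 * (ℓ : ℤ)) ↔
    ∃ m ∈ Finset.range ℓ, idx ℓ ((j : ℕ) : ZMod (2 * ℓ + 1)) m = i := by
  have hpos : (0 : ℤ) < 2 * (ℓ : ℤ) + 1 := by positivity
  have hd0 : 0 ≤ ((j : ℤ) - (i : ℤ)) % (2 * (ℓ : ℤ) + 1) := Int.emod_nonneg _ (by omega)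
  have hd1 : ((j : ℤ) - (i : ℤ)) % (2 * (ℓ : ℤ) + 1) < 2 * (ℓ : ℤ) + 1 :=
    Int.emod_lt_of_pos _ hpos
  constructor
  · rintro ⟨h1, h2⟩
    set d := ((j : ℤ) - (i : ℤ)) % (2 * (ℓ : ℤ) + 1) with hdd
    refine ⟨d.toNat / 2, Finset.mem_range.mpr (by omega), ?_⟩
    rw [← emod_eq_iff ℓ i j _ (by omega)]
    omega
  · rintro ⟨m, hm, hidx⟩
    rw [Finset.mem_range] at hm
    rw [← emod_eq_iff ℓ i j m hm] at hidx
    constructor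
    · omega
    · omega

lemma sum_mu (ℓ : ℕ) (g : Fin (2 * ℓ + 1) → ℚ) (j : Fin (2 * ℓ + 1)) :
    ∑ i, g i * muQ ℓ i j
      = ∑ m ∈ Finset.range ℓ, g (idx ℓ ((j : ℕ) : ZMod (2 * ℓ + 1)) m) := by
  have inj : ∀ m ∈ Finset.range ℓ, ∀ m' ∈ Finset.range ℓ,
      idx ℓ ((j : ℕ) : ZMod (2 * ℓ + 1)) m = idx ℓ ((j : ℕ) : ZMod (2 * ℓ + 1)) m' → m = m' := by
    intro m hm m' hm' h
    rw [Finset.mem_range] at hm hm'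
    have hv : (((j : ℕ) : ZMod (2 * ℓ + 1)) - 2 * m)
        = (((j : ℕ) : ZMod (2 * ℓ + 1)) - 2 * m') :=
      ZMod.val_injective _ (congrArg Fin.val h)
    have h2 : ((2 * m : ℕ) : ZMod (2 * ℓ + 1)) = ((2 * m' : ℕ) : ZMod (2 * ℓ + 1)) := by
      push_cast
      linear_combination -hv
    have := congrArg ZMod.val h2
    rw [ZMod.val_cast_of_lt (by omega), ZMod.val_cast_of_lt (by omega)] at this
    omega
  calc ∑ i, g i * muQ ℓ i j
      = ∑ i, if ∃ m ∈ Finset.range ℓ, idx ℓ ((j : ℕ) : ZMod (2 * ℓ + 1)) m = i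
             then g i else 0 := by
        refine Finset.sum_congr rfl fun i _ => ?_
        unfold muQ
        rw [mul_ite, mul_one, mul_zero]
        exact if_congr (cond_iff ℓ i j) rfl rfl
    _ = ∑ i ∈ Finset.univ.filter
          (fun i => ∃ m ∈ Finset.range ℓ, idx ℓ ((j : ℕ) : ZMod (2 * ℓ + 1)) m = i), g i :=
        (Finset.sum_filter _ _).symm
    _ = ∑ i ∈ (Finset.range ℓ).image (idx ℓ ((j : ℕ) : ZMod (2 * ℓ + 1))), g i := by
        congr 1
        ext i
        simp [Finset.mem_image]
    _ = ∑ m ∈ Finset.range ℓ, g (idx ℓ ((j : ℕ) : ZMod (2 * ℓ + 1)) m) :=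
        Finset.sum_image inj

end Stmt9Aux

open Stmt9Aux in
theorem stmt_9 (ℓ : ℕ) (hℓ : 3 ≤ ℓ) :
    LinearIndependent ℚ
      (fun i : Fin (2 * ℓ + 1) =>
        ((muQ ℓ i, 1) : (Fin (2 * ℓ + 1) → ℚ) × ℚ)) := by
  rw [Fintype.linearIndependent_iff]
  intro g hg k
  -- second component : sum of g = 0
  have h2 : ∑ i, g i = 0 := by
    have := congrArg Prod.snd hg
    simpa [Prod.snd_sum] using this
  -- first component
  have h1 : ∀ j : Fin (2 * ℓ + 1), ∑ i, g i * muQ ℓ i j = 0 := by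
    intro j
    have := congrArg (fun p : (Fin (2 * ℓ + 1) → ℚ) × ℚ => p.1 j) hg
    simpa [Prod.fst_sum, Finset.sum_apply] using this
  -- pass to ZMod
  set c : ZMod (2 * ℓ + 1) → ℚ := fun x => g ⟨x.val, ZMod.val_lt x⟩ with hc
  have hS : ∀ x : ZMod (2 * ℓ + 1), ∑ m ∈ Finset.range ℓ, c (x - 2 * m) = 0 := by
    intro x
    have hx : (((⟨x.val, ZMod.val_lt x⟩ : Fin (2 * ℓ + 1)) : ℕ) : ZMod (2 * ℓ + 1)) = x := by
      show ((x.val : ℕ) : ZMod (2 * ℓ + 1)) = x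
      rw [ZMod.natCast_val, ZMod.cast_id]
    have := h1 ⟨x.val, ZMod.val_lt x⟩
    rw [sum_mu, hx] at this
    exact this
  -- telescope
  obtain ⟨n, rfl⟩ : ∃ n, ℓ = n + 1 := ⟨ℓ - 1, by omega⟩
  have hstep : ∀ x : ZMod (2 * (n + 1) + 1), c (x + 2) = c (x + 3) := by
    intro x
    have A := hS (x + 2)
    have B := hS x
    rw [Finset.sum_range_succ'] at A
    rw [Finset.sum_range_succ] at B
    have hA : ∀ m ∈ Finset.range n, c (x + 2 - 2 * ((m : ℕ) + 1 : ℕ)) = c (x - 2 * m) := by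
      intro m _
      congr 1
      push_cast
      ring
    rw [Finset.sum_congr rfl hA] at A
    have hz : ((2 * (n + 1) + 1 : ℕ) : ZMod (2 * (n + 1) + 1)) = 0 := ZMod.natCast_self _
    have h3 : (x - 2 * (n : ZMod (2 * (n + 1) + 1))) = x + 3 := by
      push_cast at hz
      linear_combination -hz
    rw [h3] at B
    have : c (x + 2 - 2 * ((0 : ℕ) : ZMod (2 * (n + 1) + 1))) = c (x + 2) := by
      congr 1
      push_cast
      ring
    rw [this] at A
    linarith [A, B]
  have hsucc : ∀ y : ZMod (2 * (n + 1) + 1), c (y + 1) = c y := by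
    intro y
    have := hstep (y - 2)
    have e1 : y - 2 + 2 = y := by ring
    have e2 : y - 2 + 3 = y + 1 := by ring
    rw [e1, e2] at this
    exact this.symm
  have hnat : ∀ a : ℕ, c (a : ZMod (2 * (n + 1) + 1)) = c 0 := by
    intro a
    induction a with
    | zero => simp
    | succ a ih =>
        have : ((a + 1 : ℕ) : ZMod (2 * (n + 1) + 1)) = (a : ZMod (2 * (n + 1) + 1)) + 1 := by
          push_cast; ring
        rw [this, hsucc, ih]
  have hall : ∀ y : ZMod (2 * (n + 1) + 1), c y = c 0 := by
    intro y
    have : ((y.val : ℕ) : ZMod (2 * (n + 1) + 1)) = y := by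
      rw [ZMod.natCast_val, ZMod.cast_id]
    rw [← this, hnat]
  have hgconst : ∀ i : Fin (2 * (n + 1) + 1), g i = c 0 := by
    intro i
    have : c (((i : ℕ) : ZMod (2 * (n + 1) + 1))) = g i := by
      rw [hc]
      congr 1
      apply Fin.ext
      exact ZMod.val_cast_of_lt i.isLt
    rw [← this, hall]
  have hsum : (0 : ℚ) = (2 * (n + 1) + 1 : ℕ) * c 0 := by
    rw [← h2, Finset.sum_congr rfl (fun i _ => hgconst i)]
    simp [Finset.sum_const, mul_comm]
  have hc0 : c 0 = 0 := by
    have hne : ((2 * (n + 1) + 1 : ℕ) : ℚ) ≠ 0 := by positivity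
    rcases mul_eq_zero.mp hsum.symm with h | h
    · exact absurd h hne
    · exact h
  rw [hgconst k, hc0]
end

section
/- Let ℓ ≥ 3 be an integer. The additive monoid U^(0)_0 (a submonoid of (Fin N → ℤ) × ℤ under pointwise addition) is a free commutative monoid on the 2ℓ+1 generators (μ_0, 1), …, (μ_{2ℓ}, 1): the map (Fin (2ℓ+1) → ℕ) → U^(0)_0 sending (c_0, …, c_{2ℓ}) to Σ_i c_i·(μ_i, 1) is an isomorphism of additive monoids. (Hence the Ehrhart ring of the face {f ∈ STAB(G) : f⁺(V) = ℓ} is isomorphic to a polynomial ring in 2ℓ+1 variables with the standard grading.) -/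
/-- The monoid `U^(0)_0` as a subset of `(Fin (2ℓ+1) → ℤ) × ℤ`. -/
def U00 (ℓ : ℕ) : Set ((Fin (2 * ℓ + 1) → ℤ) × ℤ) :=
  {p | inU ℓ 0 p.1 p.2 ∧ ∑ i, p.1 i = (ℓ : ℤ) * p.2}

/-!
Write `x = ∑ cᵢ μᵢ` and `d = ∑ cᵢ`. Every `μₖ` covers exactly one of two adjacent vertices
`j, j + 1` of the cycle, except `μ_{j+2}`, which covers neither; hence
`x_j + x_{j+1} = d - c_{j+2}`. So the coefficients are recovered from `(x, d)`, and condition (ii)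
says precisely that the recovered coefficients are nonnegative. Conversely, for `(μ, d) ∈ U^(0)_0`
put `c_{j+2} = d - μ_j - μ_{j+1}`: then `x - μ` has vanishing sum along every edge of the odd
cycle, so it vanishes, and summing over the cycle with `∑ μ = ℓ d` gives `∑ c = d`.
-/

open Finset

section OddCycle

variable {n : ℕ} [NeZero n]

lemma Fin.sum_add_apply_add_one {M : Type*} [AddCommMonoid M] (y : Fin n → M) :
    ∑ j, (y j + y (j + 1)) = 2 • ∑ j, y j := by
  rw [sum_add_distrib, two_nsmul]
  exact congrArg _ (Equiv.sum_comp (Equiv.addRight 1) y)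

/-- Going once around a cycle of odd length flips the sign an odd number of times. -/
lemma Fin.eq_zero_of_add_apply_add_one_eq_zero {G : Type*} [AddCommGroup G] [IsAddTorsionFree G]
    (hn : Odd n) {y : Fin n → G} (hy : ∀ j, y j + y (j + 1) = 0) : y = 0 := by
  have two_steps (j : Fin n) (k : ℕ) : y (j + (2 * k) • 1) = y j := by
    induction k with
    | zero => simp
    | succ k ih =>
      have h₁ := hy (j + (2 * k) • 1)
      have h₂ := hy (j + (2 * k) • 1 + 1)
      rw [mul_add_one, add_nsmul, two_nsmul, ← add_assoc, ← add_assoc, ← ih,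
        ← neg_eq_of_add_eq_zero_right h₂, ← neg_eq_of_add_eq_zero_right h₁, neg_neg]
  obtain ⟨m, rfl⟩ := hn
  funext j
  have around : (2 * m + 1) • (1 : Fin (2 * m + 1)) = 0 := by
    simpa using card_nsmul_eq_zero (x := (1 : Fin (2 * m + 1)))
  have h := hy (j + (2 * m) • 1)
  rw [two_steps, add_assoc, ← succ_nsmul, around, add_zero, ← two_nsmul] at h
  exact nsmul_right_injective two_ne_zero (h.trans (nsmul_zero 2).symm)

end OddCycle

section CycleMonoid

variable {ℓ : ℕ}

lemma muV_nonneg (i j : Fin (2 * ℓ + 1)) : 0 ≤ muV ℓ i j := by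
  unfold muV
  split_ifs <;> norm_num

lemma muV_eq_ite (i j : Fin (2 * ℓ + 1)) :
    muV ℓ i j = if (j - i).val % 2 = 0 ∧ (j - i).val ≠ 2 * ℓ then 1 else 0 := by
  have h := Fin.coe_int_sub_eq_mod j i
  push_cast at h
  rw [muV, ← h]
  congr 1
  apply propext
  omega

lemma muV_add_muV_add_one (i j : Fin (2 * ℓ + 1)) :
    muV ℓ i j + muV ℓ i (j + 1) = if i = j + 2 then 0 else 1 := by
  have hcond : i = j + 2 ↔ j - i + 1 + 1 = 0 := by
    have two : (1 + 1 : Fin (2 * ℓ + 1)) = 2 := by ext; simp [Fin.val_add]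
    rw [add_assoc, two, sub_add_eq_add_sub, sub_eq_zero, eq_comm]
  rw [muV_eq_ite, muV_eq_ite, ← sub_add_eq_add_sub]
  simp only [hcond]
  generalize j - i = a
  have := a.isLt
  simp only [Fin.ext_iff, Fin.val_add_one, Fin.val_last, Fin.val_zero]
  grind

variable (ℓ) in
def muComb : (Fin (2 * ℓ + 1) → ℕ) →+ (Fin (2 * ℓ + 1) → ℤ) × ℤ where
  toFun c := (fun j => ∑ i, (c i : ℤ) * muV ℓ i j, ∑ i, (c i : ℤ))
  map_zero' := by ext <;> simp
  map_add' c c' := by ext <;> simp [add_mul, sum_add_distrib]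

lemma muComb_apply (c : Fin (2 * ℓ + 1) → ℕ) :
    muComb ℓ c = (fun j => ∑ i, (c i : ℤ) * muV ℓ i j, ∑ i, (c i : ℤ)) :=
  rfl

lemma muComb_fst_add_fst_add_one (c : Fin (2 * ℓ + 1) → ℕ) (j : Fin (2 * ℓ + 1)) :
    (muComb ℓ c).1 j + (muComb ℓ c).1 (j + 1) = (muComb ℓ c).2 - c (j + 2) := by
  simp only [muComb_apply, ← sum_add_distrib, ← mul_add,
    muV_add_muV_add_one, mul_ite, mul_zero, mul_one]
  rw [sum_ite, sum_const_zero, zero_add, filter_ne', sum_erase_eq_sub (mem_univ _)]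

lemma sum_muComb_fst (c : Fin (2 * ℓ + 1) → ℕ) :
    ∑ j, (muComb ℓ c).1 j = ℓ * (muComb ℓ c).2 := by
  have hshift : ∑ j, (c (j + 2) : ℤ) = (muComb ℓ c).2 :=
    Equiv.sum_comp (Equiv.addRight 2) (fun i ↦ (c i : ℤ))
  have h := Fin.sum_add_apply_add_one (muComb ℓ c).1
  simp only [muComb_fst_add_fst_add_one, sum_sub_distrib, sum_const, card_univ,
    Fintype.card_fin, hshift, nsmul_eq_mul] at h
  push_cast at h
  linarith

lemma muComb_mem (c : Fin (2 * ℓ + 1) → ℕ) : muComb ℓ c ∈ U00 ℓ := by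
  refine ⟨⟨fun j ↦ ?_, fun j ↦ ?_, ?_⟩, sum_muComb_fst c⟩
  · simp only [muComb_apply]
    exact sum_nonneg fun i _ ↦ mul_nonneg (Int.natCast_nonneg (c i)) (muV_nonneg i j)
  · rw [muComb_fst_add_fst_add_one]
    omega
  · rw [sum_muComb_fst]
    omega

variable (ℓ) in
def muCoeff (p : (Fin (2 * ℓ + 1) → ℤ) × ℤ) (i : Fin (2 * ℓ + 1)) : ℤ :=
  p.2 - p.1 (i - 2) - p.1 (i - 2 + 1)

lemma muCoeff_muComb (c : Fin (2 * ℓ + 1) → ℕ) (i : Fin (2 * ℓ + 1)) :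
    muCoeff ℓ (muComb ℓ c) i = c i := by
  rw [muCoeff, sub_sub, muComb_fst_add_fst_add_one, sub_add_cancel, sub_sub_cancel]

lemma muCoeff_nonneg {p : (Fin (2 * ℓ + 1) → ℤ) × ℤ} (hp : p ∈ U00 ℓ) (i : Fin (2 * ℓ + 1)) :
    0 ≤ muCoeff ℓ p i := by
  have := hp.1.2.1 (i - 2)
  rw [muCoeff]
  omega

lemma sum_muCoeff {p : (Fin (2 * ℓ + 1) → ℤ) × ℤ} (hp : p ∈ U00 ℓ) :
    ∑ i, muCoeff ℓ p i = p.2 := by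
  have hshift : ∑ i, (p.1 (i - 2) + p.1 (i - 2 + 1)) = ∑ i, (p.1 i + p.1 (i + 1)) :=
    Equiv.sum_comp (Equiv.subRight 2) (fun i ↦ p.1 i + p.1 (i + 1))
  simp only [muCoeff, sub_sub, sum_sub_distrib, sum_const, card_univ, Fintype.card_fin, hshift,
    Fin.sum_add_apply_add_one, hp.2, nsmul_eq_mul]
  push_cast
  ring

lemma muComb_toNat_muCoeff {p : (Fin (2 * ℓ + 1) → ℤ) × ℤ} (hp : p ∈ U00 ℓ) :
    muComb ℓ (fun i ↦ (muCoeff ℓ p i).toNat) = p := by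
  set c : Fin (2 * ℓ + 1) → ℕ := fun i ↦ (muCoeff ℓ p i).toNat
  have hc (i) : (c i : ℤ) = muCoeff ℓ p i := Int.toNat_of_nonneg (muCoeff_nonneg hp i)
  have hsnd : (muComb ℓ c).2 = p.2 := by
    simp only [← sum_muCoeff hp, ← hc]
    rfl
  refine Prod.ext ?_ hsnd
  rw [← sub_eq_zero]
  refine Fin.eq_zero_of_add_apply_add_one_eq_zero (by simp) fun j ↦ ?_
  simp only [Pi.sub_apply, sub_add_sub_comm, muComb_fst_add_fst_add_one, hc, muCoeff, hsnd,
    add_sub_cancel_right]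
  ring

variable (ℓ) in
def muCombEquiv : (Fin (2 * ℓ + 1) → ℕ) ≃ U00 ℓ where
  toFun c := ⟨muComb ℓ c, muComb_mem c⟩
  invFun p i := (muCoeff ℓ p i).toNat
  left_inv c := funext fun i ↦ by simp [muCoeff_muComb]
  right_inv p := Subtype.ext (muComb_toNat_muCoeff p.2)

end CycleMonoid

theorem stmt_10_general (ℓ : ℕ) :
    ∃ e : (Fin (2 * ℓ + 1) → ℕ) ≃ U00 ℓ,
      (∀ c, (e c : (Fin (2 * ℓ + 1) → ℤ) × ℤ) =
        (fun j => ∑ i, (c i : ℤ) * muV ℓ i j, ∑ i, (c i : ℤ))) ∧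
      (∀ c c', ((e (c + c') : (Fin (2 * ℓ + 1) → ℤ) × ℤ)) =
        (e c : (Fin (2 * ℓ + 1) → ℤ) × ℤ) + (e c' : (Fin (2 * ℓ + 1) → ℤ) × ℤ)) :=
  ⟨muCombEquiv ℓ, fun _ ↦ rfl, map_add (muComb ℓ)⟩

theorem stmt_10 (ℓ : ℕ) (hℓ : 3 ≤ ℓ) :
    ∃ e : (Fin (2 * ℓ + 1) → ℕ) ≃ U00 ℓ,
      (∀ c, (e c : (Fin (2 * ℓ + 1) → ℤ) × ℤ) =
        (fun j => ∑ i, (c i : ℤ) * muV ℓ i j, ∑ i, (c i : ℤ))) ∧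
      (∀ c c', ((e (c + c') : (Fin (2 * ℓ + 1) → ℤ) × ℤ)) =
        (e c : (Fin (2 * ℓ + 1) → ℤ) × ℤ) + (e c' : (Fin (2 * ℓ + 1) → ℤ) × ℤ)) :=
  stmt_10_general ℓ
end

section
/- Let ℓ ≥ 3 be an integer and let k be an integer with 2 ≤ k ≤ ℓ−1. For η : Fin N → ℤ and a ∈ ℤ, the following are equivalent: (a) (η, a) ∈ U^(1) and ℓ·a − Σ_{i ∈ Fin N} η(i) = ℓ − k; (b) the exponent vector (η − k, a − (2k+1)), where (η − k)(i) = η(i) − k for all i, belongs to U^(0)_0. (This shows that the K-span C_k of the monomials T^η with η ∈ U^(1) of margin ℓ−k is a rank 1 free module over the Ehrhart ring of the face {f ∈ STAB(G) : f⁺(V) = ℓ}, with basis T^{η_k}.) -/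
/-! The margin condition pins the total `∑ η` at `ℓ a - ℓ + k`, while the pair condition
`η i + η (i+1) ≤ a - 1`, summed over the `ℓ` disjoint consecutive pairs of the odd cycle that
avoid vertex `i`, bounds `∑ η - η i` by `ℓ (a - 1)`. Hence every `η i ≥ k`, and subtracting
`k` everywhere turns the inequalities of `U^(1)` into those of `U^(0)`; conversely `k ≥ 1`
and `k ≤ ℓ - 1` recover them. -/

open Finset

theorem Finset.sum_range_two_mul_le_nsmul {M : Type*} [AddCommMonoid M] [PartialOrder M]
    [IsOrderedAddMonoid M] (g : ℕ → M) (c : M) (h : ∀ j, g (2 * j) + g (2 * j + 1) ≤ c)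
    (n : ℕ) : ∑ t ∈ range (2 * n), g t ≤ n • c := by
  induction n with
  | zero => simp
  | succ n ih =>
    rw [show 2 * (n + 1) = 2 * n + 1 + 1 by ring, sum_range_succ, sum_range_succ, add_assoc,
      succ_nsmul]
    exact add_le_add ih (h n)

open Fin.NatCast Fin.CommRing in
theorem Fin.sum_le_add_nsmul_of_add_succ_le {M : Type*} [AddCommMonoid M] [PartialOrder M]
    [IsOrderedAddMonoid M] {n : ℕ} (f : Fin (2 * n + 1) → M) (c : M)
    (h : ∀ j, f j + f (j + 1) ≤ c) (i : Fin (2 * n + 1)) : ∑ j, f j ≤ f i + n • c := by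
  have hrotate : ∑ j, f j = ∑ t ∈ range (2 * n + 1), f (i + t) := by
    rw [← Fin.sum_univ_eq_sum_range (fun t => f (i + t))]
    simp only [Fin.cast_val_eq_self]
    exact (Fintype.sum_equiv (Equiv.addLeft i) _ _ fun _ => rfl).symm
  rw [hrotate, sum_range_succ', Nat.cast_zero, add_zero, add_comm]
  gcongr
  refine sum_range_two_mul_le_nsmul _ c (fun j => ?_) n
  simpa only [Nat.cast_add, Nat.cast_one, add_assoc] using h (i + (2 * j + 1 : ℕ))

theorem stmt_11_general (ℓ : ℕ) (k : ℤ) (hk2 : 2 ≤ k) (hkl : k ≤ (ℓ : ℤ) - 1)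
    (η : Fin (2 * ℓ + 1) → ℤ) (a : ℤ) :
    (inU ℓ 1 η a ∧ (ℓ : ℤ) * a - ∑ i, η i = (ℓ : ℤ) - k) ↔
    (inU ℓ 0 (fun i => η i - k) (a - (2 * k + 1)) ∧
      ∑ i, (η i - k) = (ℓ : ℤ) * (a - (2 * k + 1))) := by
  have hshift : ∑ i, (η i - k) = ∑ i, η i - (2 * ℓ + 1) * k := by
    simp [sum_sub_distrib]
  simp only [inU, hshift]
  constructor
  · rintro ⟨⟨-, hpair, -⟩, hmargin⟩
    have hk_le (i : Fin (2 * ℓ + 1)) : k ≤ η i := by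
      have := Fin.sum_le_add_nsmul_of_add_succ_le η (a - 1) (by simpa using hpair) i
      rw [nsmul_eq_mul] at this
      linarith
    exact ⟨⟨fun i => by linarith [hk_le i], fun i => by linarith [hpair i], by linarith⟩,
      by linarith⟩
  · rintro ⟨⟨hk_le, hpair, -⟩, hmargin⟩
    exact ⟨⟨fun i => by linarith [hk_le i], fun i => by linarith [hpair i], by linarith⟩,
      by linarith⟩

theorem stmt_11 (ℓ : ℕ) (hℓ : 3 ≤ ℓ) (k : ℤ) (hk2 : 2 ≤ k) (hkl : k ≤ (ℓ : ℤ) - 1)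
    (η : Fin (2 * ℓ + 1) → ℤ) (a : ℤ) :
    (inU ℓ 1 η a ∧ (ℓ : ℤ) * a - ∑ i, η i = (ℓ : ℤ) - k) ↔
    (inU ℓ 0 (fun i => η i - k) (a - (2 * k + 1)) ∧
      ∑ i, (η i - k) = (ℓ : ℤ) * (a - (2 * k + 1))) :=
  stmt_11_general ℓ k hk2 hkl η a
end

section
/- Let ℓ ≥ 3 be an integer and m a natural number. The number of functions μ : Fin N → ℤ with (μ, m) ∈ U^(0)_0 equals the binomial coefficient C(m + 2ℓ, 2ℓ). (This is the Hilbert function of the Ehrhart ring of the face {f ∈ STAB(G) : f⁺(V) = ℓ}, which is a polynomial ring in 2ℓ+1 variables of degree 1.) -/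
open Finset
open scoped Fin.NatCast

theorem Finset.sum_range_two_mul {M : Type*} [AddCommMonoid M] (f : ℕ → M) (n : ℕ) :
    ∑ j ∈ range (2 * n), f j = ∑ k ∈ range n, (f (2 * k) + f (2 * k + 1)) := by
  induction n with
  | zero => simp
  | succ n ih => rw [Nat.mul_succ, sum_range_succ, sum_range_succ, ih, sum_range_succ, add_assoc]

theorem Fintype.sum_comp_add_right {G M : Type*} [AddGroup G] [Fintype G] [AddCommMonoid M]
    (f : G → M) (a : G) : ∑ g, f (g + a) = ∑ g, f g :=
  Equiv.sum_comp (Equiv.addRight a) f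

theorem Fin.sum_range_add_left {n : ℕ} [NeZero n] {M : Type*} [AddCommMonoid M]
    (f : Fin n → M) (i : Fin n) : ∑ j ∈ range n, f (i + j) = ∑ k, f k := by
  rw [← Fin.sum_univ_eq_sum_range (fun j => f (i + j))]
  simp only [Fin.cast_val_eq_self]
  exact Equiv.sum_comp (Equiv.addLeft i) f

namespace OddCycle

variable {ℓ : ℕ}

theorem eq_zero_of_add_succ_eq_zero {δ : Fin (2 * ℓ + 1) → ℤ} (h : ∀ i, δ i + δ (i + 1) = 0) :
    δ = 0 := by
  funext i
  have alternating : ∀ k : ℕ, δ (i + k) = (-1) ^ k * δ i := by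
    intro k
    induction k with
    | zero => simp
    | succ k ih =>
      have := h (i + k)
      rw [Nat.cast_succ, ← add_assoc, pow_succ]
      linarith
  have := alternating (2 * ℓ + 1)
  rw [Fin.natCast_self, add_zero, Odd.neg_one_pow ⟨ℓ, rfl⟩] at this
  simp only [Pi.zero_apply]
  linarith

theorem eq_of_add_succ_eq {μ μ' : Fin (2 * ℓ + 1) → ℤ}
    (h : ∀ i, μ i + μ (i + 1) = μ' i + μ' (i + 1)) : μ = μ' :=
  sub_eq_zero.mp <| eq_zero_of_add_succ_eq_zero fun i => by simp only [Pi.sub_apply]; linarith [h i]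

def oddOffsetSum {M : Type*} [AddCommMonoid M] (ν : Fin (2 * ℓ + 1) → M) (i : Fin (2 * ℓ + 1)) :
    M :=
  ∑ k ∈ range ℓ, ν (i + (2 * k + 1 : ℕ))

theorem oddOffsetSum_add_oddOffsetSum_add_one {M : Type*} [AddCommMonoid M]
    (ν : Fin (2 * ℓ + 1) → M) (i : Fin (2 * ℓ + 1)) :
    oddOffsetSum ν i + oddOffsetSum ν (i + 1) + ν i = ∑ j, ν j := by
  rw [← Fin.sum_range_add_left ν i, sum_range_succ', sum_range_two_mul, oddOffsetSum,
    oddOffsetSum, ← sum_add_distrib]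
  congr 1
  · refine sum_congr rfl fun k _ => ?_
    rw [add_assoc i 1, add_comm 1, ← Nat.cast_succ]
  · simp

theorem sum_oddOffsetSum {M : Type*} [AddCommMonoid M] (ν : Fin (2 * ℓ + 1) → M) :
    ∑ i, oddOffsetSum ν i = ℓ • ∑ j, ν j := by
  simp only [oddOffsetSum]
  rw [sum_comm]
  simp only [Fintype.sum_comp_add_right ν, sum_const, card_range]

theorem oddOffsetSum_add_oddOffsetSum_add_one_eq_sub {m : ℕ} {ν : Fin (2 * ℓ + 1) → ℕ}
    (hν : ∑ j, ν j = m) (i : Fin (2 * ℓ + 1)) :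
    ((oddOffsetSum ν i : ℕ) : ℤ) + (oddOffsetSum ν (i + 1) : ℕ) = m - ν i := by
  have := oddOffsetSum_add_oddOffsetSum_add_one ν i
  omega

theorem injOn_oddOffsetSum (m : ℕ) :
    Set.InjOn (fun (ν : Fin (2 * ℓ + 1) → ℕ) i => ((oddOffsetSum ν i : ℕ) : ℤ))
      {ν | ∑ j, ν j = m} := by
  intro ν (hν : ∑ j, ν j = m) ν' (hν' : ∑ j, ν' j = m) h
  funext i
  have h₁ := congrFun h i
  have h₂ := congrFun h (i + 1)
  have := oddOffsetSum_add_oddOffsetSum_add_one ν i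
  have := oddOffsetSum_add_oddOffsetSum_add_one ν' i
  simp only [Nat.cast_inj] at h₁ h₂
  omega

theorem setOf_inU_zero_eq_image (m : ℕ) :
    {μ : Fin (2 * ℓ + 1) → ℤ | inU ℓ 0 μ m ∧ ∑ i, μ i = ℓ * m} =
      (fun ν i => ((oddOffsetSum ν i : ℕ) : ℤ)) '' {ν | ∑ j, ν j = m} := by
  ext μ
  constructor
  · rintro ⟨⟨-, hpair, -⟩, hsum⟩
    have hslack : ∀ i, 0 ≤ (m : ℤ) - μ i - μ (i + 1) := fun i => by linarith [hpair i]
    set ν : Fin (2 * ℓ + 1) → ℕ := fun i => ((m : ℤ) - μ i - μ (i + 1)).toNat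
    have hν : ∀ i, (ν i : ℤ) = m - μ i - μ (i + 1) := fun i => Int.toNat_of_nonneg (hslack i)
    have hνsum : ∑ j, ν j = m := by
      zify
      simp only [hν, sum_sub_distrib, Fintype.sum_comp_add_right μ, sum_const, card_univ,
        Fintype.card_fin, hsum]
      ring
    refine ⟨ν, hνsum, eq_of_add_succ_eq fun i => ?_⟩
    rw [oddOffsetSum_add_oddOffsetSum_add_one_eq_sub hνsum, hν]
    ring
  · rintro ⟨ν, hν, rfl⟩
    refine ⟨⟨fun i => Nat.cast_nonneg _, fun i => ?_, ?_⟩, ?_⟩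
    · rw [oddOffsetSum_add_oddOffsetSum_add_one_eq_sub hν]
      linarith [(ν i).cast_nonneg (α := ℤ)]
    all_goals
      rw [← Nat.cast_sum, sum_oddOffsetSum, hν]
      simp

end OddCycle

theorem Set.ncard_setOf_sum_eq (n m : ℕ) :
    {ν : Fin n → ℕ | ∑ i, ν i = m}.ncard = (n + m - 1).choose m := by
  rw [← Nat.card_coe_set_eq, Set.coe_ofPred, ← Nat.card_congr (Sym.equivNatSumOfFintype (Fin n) m),
    Nat.card_eq_fintype_card, Sym.card_sym_eq_choose, Fintype.card_fin]

theorem stmt_13_general (ℓ : ℕ) (m : ℕ) :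
    {μ : Fin (2 * ℓ + 1) → ℤ |
      inU ℓ 0 μ (m : ℤ) ∧ ∑ i, μ i = (ℓ : ℤ) * (m : ℤ)}.ncard =
      Nat.choose (m + 2 * ℓ) (2 * ℓ) := by
  rw [OddCycle.setOf_inU_zero_eq_image, (OddCycle.injOn_oddOffsetSum m).ncard_image,
    Set.ncard_setOf_sum_eq, show 2 * ℓ + 1 + m - 1 = m + 2 * ℓ by omega, Nat.choose_symm_add]

theorem stmt_13 (ℓ : ℕ) (hℓ : 3 ≤ ℓ) (m : ℕ) :
    {μ : Fin (2 * ℓ + 1) → ℤ |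
      inU ℓ 0 μ (m : ℤ) ∧ ∑ i, μ i = (ℓ : ℤ) * (m : ℤ)}.ncard =
      Nat.choose (m + 2 * ℓ) (2 * ℓ) :=
  stmt_13_general ℓ m
end
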